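/- arXiv:1106.3546 — 5 statements merged into one kernel-verified Lean document; each statement's English description precedes it below -/
import Mathlib

section
/- Let δ ∈ (0,1/3], r = δ/(2-δ), and γ = (1-r²)/(1+r²). Then the map G₁*(z) = z(γz-1)/(z-γ) satisfies |(G₁*)'(z) - γ| ≤ 6γ/7 whenever |z-1| ≥ 7δ/4. -/
/-!
Writing `z (γ z - 1) = γ z (z - γ) + (γ² - 1) z` shows `G₁*(z) = γ z + (γ² - 1) (1 + γ / (z - γ))`,
so `(G₁*)'(z) - γ = γ (1 - γ²) / (z - γ)²`. With `1 - γ = 2r² / (1 + r²)` and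
`1 - γ² = 4r² / (1 + r²)² ≤ 4r²`, the bound reduces to `7 (1 - γ²) ≤ 6 |z - γ|²`. Since
`r ≤ 3δ/5`, the pole `γ` lies within `2r² ≤ 6δ/25` of `1`, so `|z - γ| ≥ 151δ/100`, and
`7 · 4 · (3δ/5)² ≤ 6 · (151δ/100)²`.
-/

theorem hasDerivAt_mul_sub_one_div_sub {𝕜 : Type*} [NontriviallyNormedField 𝕜] {c z : 𝕜}
    (hz : z ≠ c) :
    HasDerivAt (fun w : 𝕜 => w * (c * w - 1) / (w - c)) (c + c * (1 - c ^ 2) / (z - c) ^ 2) z := by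
  have hsub : z - c ≠ 0 := sub_ne_zero.mpr hz
  have hnum : HasDerivAt (fun w : 𝕜 => w * (c * w - 1)) (1 * (c * z - 1) + z * (c * 1)) z :=
    (hasDerivAt_id' z).mul (((hasDerivAt_id' z).const_mul c).sub_const 1)
  refine (hnum.div ((hasDerivAt_id' z).sub_const c) hsub).congr_deriv ?_
  field_simp
  ring

theorem norm_sub_one_sub_le_norm_sub_ofReal (z : ℂ) {c : ℝ} (hc : c ≤ 1) :
    ‖z - 1‖ - (1 - c) ≤ ‖z - c‖ := by
  have hc1 : ‖(c : ℂ) - 1‖ = 1 - c := by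
    rw [← Complex.ofReal_one, ← Complex.ofReal_sub, Complex.norm_real, Real.norm_of_nonpos (by linarith)]
    ring
  simpa [hc1] using norm_sub_norm_le (z - 1) ((c : ℂ) - 1)

theorem norm_deriv_mul_sub_one_div_sub_sub_le {c ρ K : ℝ} {z : ℂ} (hc0 : 0 ≤ c) (hc1 : c ≤ 1)
    (hρ : 0 < ρ) (hz : ρ ≤ ‖z - c‖) (hK : 1 - c ^ 2 ≤ K * ρ ^ 2) :
    ‖deriv (fun w : ℂ => w * ((c : ℂ) * w - 1) / (w - c)) z - c‖ ≤ K * c := by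
  have hzc : 0 < ‖z - c‖ := hρ.trans_le hz
  have hne : z ≠ c := sub_ne_zero.mp (norm_pos_iff.mp hzc)
  have hnorm : ‖(1 : ℂ) - (c : ℂ) ^ 2‖ = 1 - c ^ 2 := by
    rw [← Complex.ofReal_one, ← Complex.ofReal_pow, ← Complex.ofReal_sub, Complex.norm_real,
      Real.norm_of_nonneg (by nlinarith)]
  rw [(hasDerivAt_mul_sub_one_div_sub hne).deriv, add_sub_cancel_left, norm_div, norm_mul,
    norm_pow, hnorm, Complex.norm_real, Real.norm_of_nonneg hc0, div_le_iff₀ (by positivity)]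
  have hK0 : 0 ≤ K := by nlinarith [pow_pos hρ 2]
  calc c * (1 - c ^ 2) ≤ c * (K * ρ ^ 2) := mul_le_mul_of_nonneg_left hK hc0
    _ = K * c * ρ ^ 2 := by ring
    _ ≤ K * c * ‖z - c‖ ^ 2 :=
      mul_le_mul_of_nonneg_left (pow_le_pow_left₀ hρ.le hz 2) (mul_nonneg hK0 hc0)

theorem one_sub_one_sub_sq_div_one_add_sq_le (r : ℝ) :
    1 - (1 - r ^ 2) / (1 + r ^ 2) ≤ 2 * r ^ 2 := by
  have h : 1 - (1 - r ^ 2) / (1 + r ^ 2) = 2 * r ^ 2 / (1 + r ^ 2) := by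
    field_simp
    ring
  rw [h]
  exact div_le_self (by positivity) (by nlinarith)

theorem one_sub_sq_one_sub_sq_div_one_add_sq_le (r : ℝ) :
    1 - ((1 - r ^ 2) / (1 + r ^ 2)) ^ 2 ≤ 4 * r ^ 2 := by
  have h : 1 - ((1 - r ^ 2) / (1 + r ^ 2)) ^ 2 = 4 * r ^ 2 / (1 + r ^ 2) ^ 2 := by
    field_simp
    ring
  rw [h]
  exact div_le_self (by positivity) (by nlinarith)

theorem div_two_sub_le {δ : ℝ} (hδ0 : 0 ≤ δ) (hδ : δ ≤ 1 / 3) : δ / (2 - δ) ≤ 3 / 5 * δ := by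
  rw [div_le_iff₀ (by linarith)]
  nlinarith

/-- For δ ∈ (0,1/3], r = δ/(2-δ), γ = (1-r²)/(1+r²), the map
`G₁*(z) = z(γz-1)/(z-γ)` satisfies `|(G₁*)'(z) - γ| ≤ 6γ/7` whenever `|z-1| ≥ 7δ/4`. -/
theorem stmt0 (δ : ℝ) (hδ : δ ∈ Set.Ioc (0:ℝ) (1/3)) :
    let r : ℝ := δ / (2 - δ)
    let γ : ℝ := (1 - r^2) / (1 + r^2)
    ∀ z : ℂ, 7 * δ / 4 ≤ ‖z - 1‖ →
      ‖deriv (fun w : ℂ => w * ((γ:ℂ) * w - 1) / (w - (γ:ℂ))) z - (γ:ℂ)‖ ≤ 6 * γ / 7 := by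
  obtain ⟨hδ0, hδ1⟩ := hδ
  intro r γ z hz
  have hr0 : 0 ≤ r := div_nonneg hδ0.le (by linarith)
  have hr : r ≤ 3 / 5 * δ := div_two_sub_le hδ0.le hδ1
  have hγ0 : 0 ≤ γ := div_nonneg (by nlinarith) (by positivity)
  have hγr : 1 - γ ≤ 2 * r ^ 2 := one_sub_one_sub_sq_div_one_add_sq_le r
  have hγ1 : γ ≤ 1 := div_le_one_of_le₀ (by nlinarith) (by positivity)
  have hpole : 1 - γ ≤ 6 / 25 * δ := by nlinarith
  have hzγ : 151 / 100 * δ ≤ ‖z - γ‖ := by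
    linarith [norm_sub_one_sub_le_norm_sub_ofReal z hγ1]
  rw [mul_div_right_comm]
  refine norm_deriv_mul_sub_one_div_sub_sub_le hγ0 hγ1 (by positivity) hzγ ?_
  have hγ2 : 1 - γ ^ 2 ≤ 4 * r ^ 2 := one_sub_sq_one_sub_sq_div_one_add_sq_le r
  nlinarith
end

section
/- For δ ∈ (0,1/3] and t = δ²/(2+δ)², the logarithmic capacity of K₀ ∪ (1, 1+δ] equals -log(1-t) and satisfies -log(1-t) ≥ δ²/6. -/
/-!
The Joukowski map `w ↦ w + 1/w` sends `|w| > 1` bijectively onto `ℂ ∖ [-2, 2]`, and the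
complement of `K₀ ∪ (1, r]` onto `ℂ ∖ [-2, s]` with `s = r + 1/r`. An increasing affine map
`ξ ↦ (ξ - β)/α` takes `[-2, s]` to `[-2, 2]`, so `E = J⁻¹ ∘ (affine) ∘ J` maps the complement of
the cluster conformally onto `|z| > 1`, with `E w = w/α + O(1)` and `α = (s + 2)/4`; for
`r = 1 + δ` this is `α = 1/(1 - t)`.

If `F` is any normalized exterior map with constant `c`, then `ψ = E ∘ F` is a holomorphic
self-bijection of `|z| > 1` with `ψ z = (e^c/α) z + O(1)`. Such a `ψ` has leading coefficient
`a = 1`: on the unit disc, `Q(u) = u ψ(1/u)` is holomorphic with `Q 0 = a`, and the maximum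
principle applied to `1/Q` gives `a ≥ 1`, applied to `Q` (using that `ψ` is proper, so
`|ψ| → 1` at the unit circle) gives `a ≤ 1`. Hence `c = log α = -log(1 - t)`, and
`-log(1 - t) ≥ t ≥ δ²/6` for `δ ≤ 1/3`.
-/

/-- `F` is the normalized conformal map from the exterior `D₀` of the closed unit disc
onto the complement of `K`, with `F(z) = e^c z + O(1)` at infinity.  The constant `c`
is then the logarithmic capacity `cap K`. -/
def IsNormalizedExteriorMap (K : Set ℂ) (c : ℝ) (F : ℂ → ℂ) : Prop :=
  DifferentiableOn ℂ F {z : ℂ | 1 < ‖z‖} ∧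
  Set.BijOn F {z : ℂ | 1 < ‖z‖} Kᶜ ∧
  ∃ M : ℝ, ∀ z : ℂ, 1 < ‖z‖ → ‖F z - Real.exp c * z‖ ≤ M

open Set Metric Complex Filter Topology

theorem DifferentiableOn.isOpen_image_of_injOn {f : ℂ → ℂ} {U V : Set ℂ} (hU : IsOpen U)
    (hd : DifferentiableOn ℂ f U) (hinj : InjOn f U) (hVU : V ⊆ U) (hV : IsOpen V) :
    IsOpen (f '' V) := by
  rw [isOpen_iff_mem_nhds]
  rintro _ ⟨z₀, hz₀, rfl⟩
  have hU₀ : U ∈ 𝓝 z₀ := hU.mem_nhds (hVU hz₀)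
  rcases (hd.analyticAt hU₀).eventually_constant_or_nhds_le_map_nhds with hconst | hopen
  · have hfalse : ∀ᶠ z in 𝓝[≠] z₀, False := by
      filter_upwards [nhdsWithin_le_nhds (hconst.and hU₀), self_mem_nhdsWithin]
        with z ⟨hz, hzU⟩ hne
      exact hne (hinj hzU (mem_of_mem_nhds hU₀) hz)
    obtain ⟨_, h⟩ := hfalse.exists
    exact h.elim
  · exact hopen (image_mem_map (hV.mem_nhds hz₀))

theorem DifferentiableOn.isCompact_inter_preimage_of_injOn {f : ℂ → ℂ} {U C : Set ℂ}
    (hU : IsOpen U) (hd : DifferentiableOn ℂ f U) (hinj : InjOn f U) (hC : IsCompact C)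
    (hCU : C ⊆ f '' U) : IsCompact (U ∩ f ⁻¹' C) := by
  have hopen : IsOpenMap (U.domRestrict f) := fun W hW => by
    obtain ⟨V, hV, rfl⟩ := isOpen_induced_iff.1 hW
    rw [image_domRestrict]
    exact hd.isOpen_image_of_injOn hU hinj inter_subset_right (hV.inter hU)
  have hcont := hopen.continuousOn_image_of_leftInvOn hinj.leftInvOn_invFunOn
  have himage : Function.invFunOn f U '' C = U ∩ f ⁻¹' C := by
    rw [← inter_eq_self_of_subset_left hCU,
      (surjOn_image f U).rightInvOn_invFunOn.image_inter', hinj.invFunOn_image subset_rfl,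
      inter_comm, inter_eq_self_of_subset_left hCU]
  exact himage ▸ hC.image_of_continuousOn (hcont.mono hCU)

theorem norm_le_of_forall_norm_eq_le {F : Type*} [NormedAddCommGroup F] [NormedSpace ℂ F]
    {f : ℂ → F} {U : Set ℂ} {r C : ℝ} (hr : 0 < r) (hd : DifferentiableOn ℂ f U)
    (hU : closedBall 0 r ⊆ U) (hC : ∀ u : ℂ, ‖u‖ = r → ‖f u‖ ≤ C) : ‖f 0‖ ≤ C :=
  norm_le_of_forall_mem_frontier_norm_le isBounded_ball (hd.diffContOnCl_ball hU)
    (fun u hu => hC u (by simpa [frontier_ball _ hr.ne'] using hu))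
    (subset_closure (mem_ball_self hr))

abbrev exteriorDisc : Set ℂ := {z : ℂ | 1 < ‖z‖}

theorem isOpen_exteriorDisc : IsOpen exteriorDisc := isOpen_lt continuous_const continuous_norm

lemma one_lt_norm_inv {𝕜 : Type*} [NormedDivisionRing 𝕜] {u : 𝕜} (hu : u ≠ 0) (h : ‖u‖ < 1) :
    1 < ‖u⁻¹‖ := by
  rw [norm_inv]; exact one_lt_inv₀ (norm_pos_iff.2 hu) |>.2 h

section ExteriorSelfMap

variable {ψ : ℂ → ℂ} {a M : ℝ}

/-- When `ψ z = a z + O(1)` at `∞`, `a` is the value at the removable singularity. -/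
noncomputable def inversionConj (ψ : ℂ → ℂ) (a : ℝ) : ℂ → ℂ :=
  Function.update (fun u => u * ψ u⁻¹) 0 a

lemma inversionConj_of_ne_zero {u : ℂ} (hu : u ≠ 0) :
    inversionConj ψ a u = u * ψ u⁻¹ :=
  Function.update_of_ne hu _ _

lemma norm_inversionConj_sub_le (hM : ∀ z : ℂ, 1 < ‖z‖ → ‖ψ z - a * z‖ ≤ M) {u : ℂ}
    (hu : ‖u‖ < 1) : ‖inversionConj ψ a u - a‖ ≤ M * ‖u‖ := by
  rcases eq_or_ne u 0 with rfl | hu0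
  · simp [inversionConj]
  have hsplit : inversionConj ψ a u - a = u * (ψ u⁻¹ - a * u⁻¹) := by
    rw [inversionConj_of_ne_zero hu0]; field_simp
  rw [hsplit, norm_mul, mul_comm]
  exact mul_le_mul_of_nonneg_right (hM _ (one_lt_norm_inv hu0 hu)) (norm_nonneg u)

lemma differentiableOn_inversionConj (hd : DifferentiableOn ℂ ψ exteriorDisc)
    (hM : ∀ z : ℂ, 1 < ‖z‖ → ‖ψ z - a * z‖ ≤ M) :
    DifferentiableOn ℂ (inversionConj ψ a) (ball 0 1) := by
  rw [← differentiableOn_compl_singleton_and_continuousAt_iff (ball_mem_nhds 0 one_pos)]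
  constructor
  · intro u ⟨hu, hu0⟩
    have hu1 : ‖u‖ < 1 := by simpa using hu
    have hu0 : u ≠ 0 := hu0
    have hdiff : DifferentiableAt ℂ (fun v : ℂ => v * ψ v⁻¹) u :=
      differentiableAt_id.mul <| (hd.differentiableAt (isOpen_exteriorDisc.mem_nhds
        (one_lt_norm_inv hu0 hu1))).comp u (differentiableAt_inv hu0)
    refine (hdiff.congr_of_eventuallyEq ?_).differentiableWithinAt
    filter_upwards [isOpen_ne.mem_nhds hu0] with v hv
    exact inversionConj_of_ne_zero hv
  · rw [ContinuousAt, tendsto_iff_norm_sub_tendsto_zero]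
    refine squeeze_zero' (Eventually.of_forall fun _ => norm_nonneg _) ?_
      (by simpa using (continuous_norm.tendsto (0 : ℂ)).const_mul M)
    filter_upwards [ball_mem_nhds (0 : ℂ) one_pos] with u hu
    simpa [inversionConj] using norm_inversionConj_sub_le hM (by simpa using hu)

lemma inversionConj_ne_zero (ha : a ≠ 0) (hmaps : MapsTo ψ exteriorDisc exteriorDisc) {u : ℂ}
    (hu : ‖u‖ < 1) : inversionConj ψ a u ≠ 0 := by
  rcases eq_or_ne u 0 with rfl | hu0
  · simpa [inversionConj] using ha
  rw [inversionConj_of_ne_zero hu0]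
  refine mul_ne_zero hu0 (norm_pos_iff.1 ?_)
  exact one_pos.trans (hmaps (one_lt_norm_inv hu0 hu))

theorem one_le_of_mapsTo_exteriorDisc (ha : 0 < a) (hd : DifferentiableOn ℂ ψ exteriorDisc)
    (hmaps : MapsTo ψ exteriorDisc exteriorDisc)
    (hM : ∀ z : ℂ, 1 < ‖z‖ → ‖ψ z - a * z‖ ≤ M) : 1 ≤ a := by
  refine le_of_forall_lt_imp_le_of_dense fun r hr => ?_
  rcases le_or_gt r 0 with hr0 | hr0
  · exact hr0.trans ha.le
  have hdiff : DifferentiableOn ℂ (fun u => (inversionConj ψ a u)⁻¹) (ball 0 1) :=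
    (differentiableOn_inversionConj hd hM).inv fun u hu =>
      inversionConj_ne_zero ha.ne' hmaps (by simpa using hu)
  have hsphere : ∀ u : ℂ, ‖u‖ = r → ‖(inversionConj ψ a u)⁻¹‖ ≤ r⁻¹ := by
    intro u hu
    have hu0 : u ≠ 0 := norm_pos_iff.1 (hu ▸ hr0)
    have hψ : 1 < ‖ψ u⁻¹‖ := hmaps (one_lt_norm_inv hu0 (hu ▸ hr))
    rw [inversionConj_of_ne_zero hu0, norm_inv, norm_mul, hu]
    exact inv_anti₀ hr0 (by nlinarith)
  have := norm_le_of_forall_norm_eq_le hr0 hdiff (closedBall_subset_ball hr) hsphere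
  simp only [inversionConj, Function.update_self, norm_inv, norm_real, Real.norm_of_nonneg ha.le]
    at this
  exact (inv_le_inv₀ ha hr0).1 this

/-- Holomorphic bijections are proper. -/
lemma eventually_norm_lt_of_bijOn_exteriorDisc (hd : DifferentiableOn ℂ ψ exteriorDisc)
    (hb : BijOn ψ exteriorDisc exteriorDisc) {ε : ℝ} (hε : 0 < ε) (R : ℝ) :
    ∀ᶠ ρ in 𝓝 (1 : ℝ), ∀ z ∈ exteriorDisc, ‖z‖ = ρ → ‖ψ z‖ ≤ R → ‖ψ z‖ < 1 + ε := by
  set C : Set ℂ := {w | 1 + ε ≤ ‖w‖ ∧ ‖w‖ ≤ R}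
  have hC : IsCompact C :=
    isCompact_of_isClosed_isBounded
      ((isClosed_le continuous_const continuous_norm).inter
        (isClosed_le continuous_norm continuous_const))
      ((isBounded_closedBall (x := (0 : ℂ)) (r := R)).subset fun w hw => by simpa using hw.2)
  have hCU : C ⊆ ψ '' exteriorDisc := by
    rw [hb.image_eq]
    exact fun w hw => show 1 < ‖w‖ by linarith [hw.1]
  have hL := (hd.isCompact_inter_preimage_of_injOn isOpen_exteriorDisc hb.injOn hC hCU).image
    continuous_norm
  have h1 : (1 : ℝ) ∉ norm '' (exteriorDisc ∩ ψ ⁻¹' C) := by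
    rintro ⟨z, ⟨hz, -⟩, hz1⟩
    exact hz.ne' hz1
  filter_upwards [hL.isClosed.isOpen_compl.mem_nhds h1] with ρ hρ z hz hzρ hR
  by_contra! hge
  exact hρ ⟨z, ⟨hz, hge, hR⟩, hzρ⟩

theorem le_one_of_bijOn_exteriorDisc (ha : 0 < a) (hd : DifferentiableOn ℂ ψ exteriorDisc)
    (hb : BijOn ψ exteriorDisc exteriorDisc)
    (hM : ∀ z : ℂ, 1 < ‖z‖ → ‖ψ z - a * z‖ ≤ M) : a ≤ 1 := by
  refine le_of_forall_gt_imp_ge_of_dense fun c hc => ?_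
  have hnear := eventually_norm_lt_of_bijOn_exteriorDisc hd hb (sub_pos.2 hc) (2 * a + M)
  obtain ⟨ρ, hρ, hρ1, hρ2⟩ :=
    ((hnear.filter_mono nhdsWithin_le_nhds).and (Ioc_mem_nhdsGT one_lt_two)).exists
  have hsphere : ∀ u : ℂ, ‖u‖ = ρ⁻¹ → ‖inversionConj ψ a u‖ ≤ c := by
    intro u hu
    have hu0 : u ≠ 0 := norm_pos_iff.1 (hu ▸ inv_pos.2 (one_pos.trans hρ1))
    have hz : ‖u⁻¹‖ = ρ := by rw [norm_inv, hu, inv_inv]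
    have hzD : 1 < ‖u⁻¹‖ := hz ▸ hρ1
    have hψR : ‖ψ u⁻¹‖ ≤ 2 * a + M :=
      calc ‖ψ u⁻¹‖ ≤ ‖(a : ℂ) * u⁻¹‖ + ‖ψ u⁻¹ - a * u⁻¹‖ := norm_le_norm_add_norm_sub' _ _
        _ ≤ a * ρ + M := by
          rw [norm_mul, norm_real, Real.norm_of_nonneg ha.le, hz]
          exact add_le_add_right (hM u⁻¹ hzD) _
        _ ≤ 2 * a + M := by nlinarith
    have hψ := hρ u⁻¹ hzD hz hψR
    rw [inversionConj_of_ne_zero hu0, norm_mul, hu]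
    calc ρ⁻¹ * ‖ψ u⁻¹‖ ≤ 1 * ‖ψ u⁻¹‖ := by gcongr; exact inv_le_one_of_one_le₀ hρ1.le
      _ ≤ c := by linarith
  have := norm_le_of_forall_norm_eq_le (inv_pos.2 (one_pos.trans hρ1))
    (differentiableOn_inversionConj hd hM) (closedBall_subset_ball (inv_lt_one_of_one_lt₀ hρ1))
    hsphere
  simpa [inversionConj, Real.norm_of_nonneg ha.le] using this

end ExteriorSelfMap

theorem IsNormalizedExteriorMap.exp_eq {K : Set ℂ} {c α M₀ : ℝ} {F E : ℂ → ℂ}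
    (hF : IsNormalizedExteriorMap K c F) (hα : 0 < α) (hEd : DifferentiableOn ℂ E Kᶜ)
    (hEb : BijOn E Kᶜ exteriorDisc) (hE : ∀ w ∈ Kᶜ, ‖E w - (α : ℂ)⁻¹ * w‖ ≤ M₀) :
    Real.exp c = α := by
  obtain ⟨hFd, hFb, M, hM⟩ := hF
  have ha : 0 < Real.exp c / α := div_pos (Real.exp_pos c) hα
  have hbound : ∀ z : ℂ, 1 < ‖z‖ →
      ‖(E ∘ F) z - ((Real.exp c / α : ℝ) : ℂ) * z‖ ≤ M₀ + ‖(α : ℂ)⁻¹‖ * M := by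
    intro z hz
    have hsplit : (E ∘ F) z - ((Real.exp c / α : ℝ) : ℂ) * z
        = (E (F z) - (α : ℂ)⁻¹ * F z) + (α : ℂ)⁻¹ * (F z - Real.exp c * z) := by
      rw [Function.comp_apply]; push_cast; ring
    rw [hsplit]
    refine (norm_add_le _ _).trans (add_le_add (hE _ (hFb.mapsTo hz)) ?_)
    rw [norm_mul]
    exact mul_le_mul_of_nonneg_left (hM z hz) (norm_nonneg _)
  have hd : DifferentiableOn ℂ (E ∘ F) exteriorDisc := hEd.comp hFd hFb.mapsTo
  have hb : BijOn (E ∘ F) exteriorDisc exteriorDisc := hEb.comp hFb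
  have hone : Real.exp c / α = 1 :=
    le_antisymm (le_one_of_bijOn_exteriorDisc ha hd hb hbound)
      (one_le_of_mapsTo_exteriorDisc ha hd hb.mapsTo hbound)
  exact (div_eq_one_iff_eq hα.ne').1 hone

theorem Complex.re_sqrt_pos {z : ℂ} (hz : z ∈ slitPlane) : 0 < (Complex.sqrt z).re := by
  rw [Complex.sqrt, cpow_inv_two_re, Real.sqrt_pos]
  rcases mem_slitPlane_iff.1 hz with hre | him
  · linarith [norm_nonneg z]
  · linarith [neg_abs_le z.re, abs_re_lt_norm.2 him]

theorem Complex.sq_sqrt (z : ℂ) : Complex.sqrt z ^ 2 = z :=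
  cpow_ofNat_inv_pow z 2

noncomputable def joukowski (w : ℂ) : ℂ := w + w⁻¹

def complSegment (b : ℝ) : Set ℂ := {ξ | ξ.im = 0 → ξ.re < -2 ∨ b < ξ.re}

/-- The root of `w² - ξ w + 1` of modulus `> 1`; `ξ √(1 - 4/ξ²)` is the branch of `√(ξ² - 4)`
that is holomorphic off `[-2, 2]`. -/
noncomputable def joukowskiInv (ξ : ℂ) : ℂ := (ξ + ξ * Complex.sqrt (1 - 4 / ξ ^ 2)) / 2

lemma mem_complSegment {b : ℝ} {ξ : ℂ} :
    ξ ∈ complSegment b ↔ (ξ.im = 0 → ξ.re < -2 ∨ b < ξ.re) :=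
  Iff.rfl

lemma complSegment_subset {b b' : ℝ} (h : b ≤ b') : complSegment b' ⊆ complSegment b :=
  fun _ hξ him => (hξ him).imp_right h.trans_lt

lemma ne_zero_of_mem_complSegment {b : ℝ} (hb : 0 ≤ b) {ξ : ℂ} (hξ : ξ ∈ complSegment b) :
    ξ ≠ 0 := by
  rintro rfl
  rcases hξ rfl with h | h <;> simp at h <;> linarith

lemma one_sub_four_div_sq_mem_slitPlane {ξ : ℂ} (hξ : ξ ∈ complSegment 2) :
    1 - 4 / ξ ^ 2 ∈ slitPlane := by
  have hξ0 := ne_zero_of_mem_complSegment zero_le_two hξ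
  by_contra hns
  obtain ⟨hre, him⟩ : (1 - 4 / ξ ^ 2).re ≤ 0 ∧ (1 - 4 / ξ ^ 2).im = 0 := by
    simpa [mem_slitPlane_iff, not_or] using hns
  set x := (1 - 4 / ξ ^ 2).re
  -- then `ξ² = 4 / (1 - x) ∈ (0, 4]`, which forces `ξ ∈ [-2, 2]`
  have hsq : ξ ^ 2 = ((4 / (1 - x) : ℝ) : ℂ) := by
    have hx : 1 - 4 / ξ ^ 2 = (x : ℂ) := Complex.ext rfl (by simpa using him)
    have h1x : (1 : ℂ) - x ≠ 0 := by exact_mod_cast (by linarith : (1 : ℝ) - x ≠ 0)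
    push_cast
    field_simp at hx ⊢
    linear_combination hx
  have hq : 0 < 4 / (1 - x) ∧ 4 / (1 - x) ≤ 4 :=
    ⟨by apply div_pos <;> linarith, by rw [div_le_iff₀ (by linarith)]; nlinarith⟩
  obtain ⟨hsre, hsim⟩ := Complex.ext_iff.1 hsq
  simp only [sq, mul_re, mul_im, ofReal_re, ofReal_im] at hsre hsim
  have him0 : ξ.im = 0 := by
    rcases mul_eq_zero.1 (by linarith : ξ.re * ξ.im = 0) with h | h
    · nlinarith
    · exact h
  rcases hξ him0 with h | h <;> nlinarith

section JoukowskiInv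

variable {ξ : ℂ}

lemma joukowskiInv_mul_conj (hξ : ξ ∈ complSegment 2) :
    joukowskiInv ξ * ((ξ - ξ * Complex.sqrt (1 - 4 / ξ ^ 2)) / 2) = 1 := by
  have hξ0 := ne_zero_of_mem_complSegment zero_le_two hξ
  have hsq := Complex.sq_sqrt (1 - 4 / ξ ^ 2)
  rw [joukowskiInv]
  generalize Complex.sqrt (1 - 4 / ξ ^ 2) = ν at hsq ⊢
  field_simp at hsq ⊢
  linear_combination (-1 : ℂ) * hsq

lemma joukowski_joukowskiInv (hξ : ξ ∈ complSegment 2) : joukowski (joukowskiInv ξ) = ξ := by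
  rw [joukowski, ← eq_inv_of_mul_eq_one_right (joukowskiInv_mul_conj hξ), joukowskiInv]
  ring

lemma one_lt_norm_joukowskiInv (hξ : ξ ∈ complSegment 2) : 1 < ‖joukowskiInv ξ‖ := by
  set ν := Complex.sqrt (1 - 4 / ξ ^ 2)
  have hν : 0 < ν.re := Complex.re_sqrt_pos (one_sub_four_div_sq_mem_slitPlane hξ)
  have hξ0 : 0 < normSq ξ := normSq_pos.2 (ne_zero_of_mem_complSegment zero_le_two hξ)
  have hdiff : normSq (ξ + ξ * ν) = normSq (ξ - ξ * ν) + 4 * ν.re * normSq ξ := by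
    simp only [normSq_apply, add_re, add_im, sub_re, sub_im, mul_re, mul_im]
    ring
  have hlt : ‖ξ - ξ * ν‖ < ‖ξ + ξ * ν‖ := by
    rw [← sq_lt_sq₀ (norm_nonneg _) (norm_nonneg _), Complex.sq_norm, Complex.sq_norm, hdiff]
    nlinarith
  have hprod := congrArg norm (joukowskiInv_mul_conj hξ)
  rw [norm_mul, norm_div, norm_one, RCLike.norm_ofNat] at hprod
  rw [joukowskiInv, norm_div, RCLike.norm_ofNat] at hprod ⊢
  nlinarith [norm_nonneg (ξ - ξ * ν)]

end JoukowskiInv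

lemma joukowski_ofReal (x : ℝ) : joukowski x = ((x + x⁻¹ : ℝ) : ℂ) := by
  push_cast; rfl

lemma two_lt_add_inv {x : ℝ} (hx : 1 < x) : 2 < x + x⁻¹ := by
  have hx0 : 0 < x := by linarith
  have : x + x⁻¹ - 2 = (x - 1) ^ 2 / x := by field_simp; ring
  nlinarith [div_pos (pow_pos (sub_pos.2 hx) 2) hx0]

lemma strictMonoOn_add_inv : StrictMonoOn (fun x : ℝ => x + x⁻¹) (Ici 1) := by
  intro y (hy : 1 ≤ y) x (hx : 1 ≤ x) hxy
  have : x + x⁻¹ - (y + y⁻¹) = (x - y) * (x * y - 1) / (x * y) := by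
    field_simp; ring
  have := div_pos (mul_pos (sub_pos.2 hxy) (by nlinarith : 0 < x * y - 1))
    (by positivity : 0 < x * y)
  simp only
  linarith

lemma eq_ofReal_of_joukowski_im_eq_zero {z : ℂ} (hz : 1 < ‖z‖) (him : (joukowski z).im = 0) :
    z = z.re := by
  have hns : 1 < normSq z := by rw [← Complex.sq_norm]; nlinarith
  have hfac : z.im * (normSq z - 1) = 0 := by
    rw [joukowski, add_im, inv_im] at him
    field_simp at him
    linear_combination him
  refine Complex.ext rfl ?_
  simpa [(by linarith : normSq z - 1 ≠ 0)] using hfac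

lemma joukowski_mem_complSegment {z : ℂ} (hz : 1 < ‖z‖) : joukowski z ∈ complSegment 2 := by
  intro him
  have hzr := eq_ofReal_of_joukowski_im_eq_zero hz him
  rw [hzr, norm_real, Real.norm_eq_abs, lt_abs] at hz
  rw [hzr, joukowski_ofReal, ofReal_re]
  rcases hz with h | h
  · exact Or.inr (two_lt_add_inv h)
  · have := two_lt_add_inv h
    rw [inv_neg] at this
    exact Or.inl (by linarith)

lemma injOn_joukowski : InjOn joukowski exteriorDisc := by
  intro w₁ (hw₁ : 1 < ‖w₁‖) w₂ (hw₂ : 1 < ‖w₂‖) heq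
  have h₁ : w₁ ≠ 0 := norm_pos_iff.1 (by linarith)
  have h₂ : w₂ ≠ 0 := norm_pos_iff.1 (by linarith)
  have hfac : (w₁ - w₂) * (w₁ * w₂ - 1) = 0 := by
    rw [joukowski, joukowski] at heq
    field_simp at heq
    linear_combination heq
  rcases mul_eq_zero.1 hfac with h | h
  · exact sub_eq_zero.1 h
  · have : ‖w₁‖ * ‖w₂‖ = 1 := by rw [← norm_mul, sub_eq_zero.1 h, norm_one]
    nlinarith

lemma invOn_joukowskiInv :
    InvOn joukowski joukowskiInv (complSegment 2) exteriorDisc := by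
  refine ⟨fun ξ hξ => joukowski_joukowskiInv hξ, fun z (hz : 1 < ‖z‖) => ?_⟩
  have hξ := joukowski_mem_complSegment hz
  exact injOn_joukowski (one_lt_norm_joukowskiInv hξ) hz (joukowski_joukowskiInv hξ)

lemma bijOn_joukowskiInv : BijOn joukowskiInv (complSegment 2) exteriorDisc :=
  invOn_joukowskiInv.bijOn (fun _ hξ => one_lt_norm_joukowskiInv hξ)
    (fun _ hz => joukowski_mem_complSegment hz)

lemma differentiableOn_joukowskiInv : DifferentiableOn ℂ joukowskiInv (complSegment 2) := by
  intro ξ hξ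
  have hξ0 := ne_zero_of_mem_complSegment zero_le_two hξ
  refine DifferentiableAt.differentiableWithinAt ?_
  unfold joukowskiInv
  have : DifferentiableAt ℂ (fun ξ : ℂ => 1 - 4 / ξ ^ 2) ξ := by fun_prop (disch := simpa)
  have := (differentiableAt_sqrt (one_sub_four_div_sq_mem_slitPlane hξ)).comp ξ this
  fun_prop

lemma differentiableOn_joukowski : DifferentiableOn ℂ joukowski exteriorDisc := by
  intro z (hz : 1 < ‖z‖)
  have : z ≠ 0 := norm_pos_iff.1 (by linarith)
  unfold joukowski
  fun_prop (disch := assumption)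

lemma mem_slit_iff_joukowski_not_mem {r : ℝ} (hr : 1 < r) {w : ℂ} (hw : 1 < ‖w‖) :
    w ∈ (fun x : ℝ => (x : ℂ)) '' Ioc 1 r ↔ joukowski w ∉ complSegment (r + r⁻¹) := by
  have hmono : ∀ x : ℝ, 1 ≤ x → (x + x⁻¹ ≤ r + r⁻¹ ↔ x ≤ r) := fun x hx =>
    strictMonoOn_add_inv.le_iff_le (mem_Ici.2 hx) (mem_Ici.2 hr.le)
  constructor
  · rintro ⟨x, ⟨hx1, hxr⟩, rfl⟩ hξ
    rw [joukowski_ofReal, mem_complSegment, ofReal_re] at hξ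
    rcases hξ (ofReal_im _) with h | h
    · linarith [two_lt_add_inv hx1]
    · exact (hmono x hx1.le).2 hxr |>.not_gt h
  · intro hξ
    simp only [mem_complSegment, Classical.not_imp, not_or, not_lt] at hξ
    obtain ⟨him, hleft, hright⟩ := hξ
    have hwr := eq_ofReal_of_joukowski_im_eq_zero hw him
    rw [hwr, joukowski_ofReal, ofReal_re] at hleft hright
    rw [hwr, norm_real, Real.norm_eq_abs, lt_abs] at hw
    rcases hw with h | h
    · exact ⟨w.re, ⟨h, (hmono w.re h.le).1 hright⟩, hwr.symm⟩
    · have := two_lt_add_inv h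
      rw [inv_neg] at this
      linarith

lemma compl_closedBall_union_slit {r : ℝ} (hr : 1 < r) :
    (closedBall (0 : ℂ) 1 ∪ (fun x : ℝ => (x : ℂ)) '' Ioc 1 r)ᶜ
      = exteriorDisc ∩ joukowski ⁻¹' complSegment (r + r⁻¹) := by
  ext w
  simp only [mem_compl_iff, mem_union, not_or, mem_closedBall, dist_zero_right, not_le,
    mem_inter_iff, mem_preimage]
  constructor
  · rintro ⟨hw, hslit⟩
    exact ⟨hw, not_not.1 fun h => hslit ((mem_slit_iff_joukowski_not_mem hr hw).2 h)⟩
  · rintro ⟨hw, hξ⟩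
    exact ⟨hw, fun h => (mem_slit_iff_joukowski_not_mem hr hw).1 h hξ⟩

lemma bijOn_affine_complSegment {α β : ℝ} (hα : 0 < α) (hβ : 2 * α - β = 2) :
    BijOn (fun ξ : ℂ => (ξ - β) / α) (complSegment (2 * α + β)) (complSegment 2) := by
  have hα0 : (α : ℂ) ≠ 0 := by exact_mod_cast hα.ne'
  refine InvOn.bijOn (f' := fun ξ => α * ξ + β) ⟨fun ξ _ => ?_, fun ξ _ => ?_⟩ ?_ ?_
  · field_simp; ring
  · field_simp; ring
  · intro ξ hξ him
    have him' : ξ.im = 0 := by simpa [hα.ne'] using him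
    simp only [div_ofReal_re, sub_re, ofReal_re, lt_div_iff₀ hα, div_lt_iff₀ hα]
    rcases hξ him' with h | h
    · left; linarith
    · right; linarith
  · intro ξ hξ him
    have him' : ξ.im = 0 := by simpa [hα.ne'] using him
    simp only [add_re, mul_re, ofReal_re, ofReal_im, him', mul_zero, sub_zero]
    rcases hξ him' with h | h
    · left; nlinarith
    · right; nlinarith

lemma norm_joukowskiInv_affine_sub_le {α β : ℝ} (hα : 0 < α) {w : ℂ} (hw : 1 < ‖w‖)
    (hξ : (joukowski w - β) / α ∈ complSegment 2) :
    ‖joukowskiInv ((joukowski w - β) / α) - (α : ℂ)⁻¹ * w‖ ≤ 1 + (1 + |β|) / α := by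
  set v := joukowskiInv ((joukowski w - β) / α)
  have hv : 1 < ‖v‖ := one_lt_norm_joukowskiInv hξ
  have hsplit : v - (α : ℂ)⁻¹ * w = (w⁻¹ - β) / α - v⁻¹ := by
    have hJ : v + v⁻¹ = (w + w⁻¹ - β) / α := joukowski_joukowskiInv hξ
    have hα0 : (α : ℂ) ≠ 0 := by exact_mod_cast hα.ne'
    rw [eq_div_iff hα0] at hJ
    field_simp
    linear_combination hJ
  have hnum : ‖w⁻¹ - β‖ ≤ 1 + |β| := by
    refine (norm_sub_le _ _).trans (add_le_add ?_ (norm_real β).le)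
    rw [norm_inv]; exact inv_le_one_of_one_le₀ hw.le
  rw [hsplit]
  refine (norm_sub_le _ _).trans ?_
  rw [norm_div, norm_real, Real.norm_of_nonneg hα.le, norm_inv, add_comm]
  gcongr
  exact inv_le_one_of_one_le₀ hv.le

theorem exists_exteriorMap_closedBall_union_slit {r : ℝ} (hr : 1 < r) :
    ∃ (E : ℂ → ℂ) (M₀ : ℝ),
      DifferentiableOn ℂ E (closedBall (0 : ℂ) 1 ∪ (fun x : ℝ => (x : ℂ)) '' Ioc 1 r)ᶜ ∧
      BijOn E (closedBall (0 : ℂ) 1 ∪ (fun x : ℝ => (x : ℂ)) '' Ioc 1 r)ᶜ exteriorDisc ∧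
      ∀ w ∈ (closedBall (0 : ℂ) 1 ∪ (fun x : ℝ => (x : ℂ)) '' Ioc 1 r)ᶜ,
        ‖E w - (((r + r⁻¹ + 2) / 4 : ℝ) : ℂ)⁻¹ * w‖ ≤ M₀ := by
  set s := r + r⁻¹
  set α := (s + 2) / 4
  set β := (s - 2) / 2
  have hα : 0 < α := by have := two_lt_add_inv hr; positivity
  rw [compl_closedBall_union_slit hr]
  have hA : BijOn (fun ξ : ℂ => (ξ - β) / α) (complSegment s) (complSegment 2) := by
    have hs : 2 * α + β = s := by ring
    exact hs ▸ bijOn_affine_complSegment (β := β) hα (by ring)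
  have hJ : BijOn joukowski (exteriorDisc ∩ joukowski ⁻¹' complSegment s) (complSegment s) :=
    (invOn_joukowskiInv.symm.mono inter_subset_left (complSegment_subset
      (two_lt_add_inv hr).le)).bijOn (fun _ hw => hw.2) fun ξ hξ =>
        ⟨one_lt_norm_joukowskiInv (complSegment_subset (two_lt_add_inv hr).le hξ),
          by rwa [mem_preimage, joukowski_joukowskiInv
            (complSegment_subset (two_lt_add_inv hr).le hξ)]⟩
  refine ⟨joukowskiInv ∘ (fun ξ : ℂ => (ξ - β) / α) ∘ joukowski, 1 + (1 + |β|) / α,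
    ?_, bijOn_joukowskiInv.comp (hA.comp hJ), fun w hw => ?_⟩
  · refine differentiableOn_joukowskiInv.comp ?_ (hA.mapsTo.comp hJ.mapsTo)
    exact (differentiableOn_joukowski.mono inter_subset_left).sub_const _ |>.div_const _
  · exact norm_joukowskiInv_affine_sub_le hα hw.1 (hA.mapsTo (hJ.mapsTo hw))

lemma sq_div_six_le_neg_log_one_sub {δ : ℝ} (h0 : 0 < δ) (h1 : δ ≤ 1 / 3) :
    δ ^ 2 / 6 ≤ -Real.log (1 - δ ^ 2 / (2 + δ) ^ 2) := by
  have ht : δ ^ 2 / 6 ≤ δ ^ 2 / (2 + δ) ^ 2 :=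
    div_le_div_of_nonneg_left (sq_nonneg δ) (by positivity) (by nlinarith)
  have ht1 : δ ^ 2 / (2 + δ) ^ 2 < 1 := by rw [div_lt_one (by positivity)]; nlinarith
  linarith [Real.log_le_sub_one_of_pos (sub_pos.2 ht1)]

/-- For δ ∈ (0,1/3] and t = δ²/(2+δ)², the logarithmic capacity of the slit cluster
`K₀ ∪ (1, 1+δ]` equals `-log(1-t)` and satisfies `-log(1-t) ≥ δ²/6`. -/
theorem stmt2 (δ : ℝ) (hδ : δ ∈ Set.Ioc (0:ℝ) (1/3)) :
    let t : ℝ := δ^2 / (2 + δ)^2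
    let P : Set ℂ := (fun x : ℝ => (x : ℂ)) '' Set.Ioc 1 (1 + δ)
    let K : Set ℂ := Metric.closedBall (0:ℂ) 1 ∪ P
    (∀ (c : ℝ) (F : ℂ → ℂ), IsNormalizedExteriorMap K c F → c = -Real.log (1 - t)) ∧
    δ^2 / 6 ≤ -Real.log (1 - t) := by
  obtain ⟨hδ0, hδ3⟩ := hδ
  refine ⟨fun c F hF => ?_, sq_div_six_le_neg_log_one_sub hδ0 hδ3⟩
  obtain ⟨E, M₀, hEd, hEb, hE⟩ :=
    exists_exteriorMap_closedBall_union_slit (by linarith : 1 < 1 + δ)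
  have hexp := hF.exp_eq (by positivity) hEd hEb hE
  have hα : (1 + δ + (1 + δ)⁻¹ + 2) / 4 = (1 - δ ^ 2 / (2 + δ) ^ 2)⁻¹ := by
    have h1t : 1 - δ ^ 2 / (2 + δ) ^ 2 = 4 * (1 + δ) / (2 + δ) ^ 2 := by field_simp; ring
    rw [h1t, inv_div]
    field_simp
    ring
  rw [← Real.log_inv, ← hα, ← hexp, Real.log_exp]
end

section
/- Let g₀ : ℝ → ℝ be 2π-periodic with |g₀(θ)| ≤ α²/(|θ| ∨ α) for |θ| ≤ π, where α = Cδ ≤ π. Then (1/2π)∫₀^{2π} g₀(θ)² dθ ≤ C'δ³ for an absolute constant C' depending only on C, and for a ∈ [δ, π], (1/2π)∫₀^{2π} |g₀(θ)g₀(θ+a)| dθ ≤ C'(δ⁴/a)·log(1/δ). -/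
/-!
Split each integral at `|θ| = α`: below it the profile `α² / (|θ| ∨ α)` is at most `α`, above it
equals `α² / |θ|`, which gives `α³` for the square and `α² (1 + log (π / α))` for the first power.
For the correlation, `θ` and `θ + a` cannot both lie within `a / 2` of `2πℤ`, so
`|g₀ θ · g₀ (θ + a)| ≤ (2α² / a) (|g₀ θ| + |g₀ (θ + a)|)`, and translation invariance of the
integral over a period turns this into twice the `L¹` bound.
-/

open Real intervalIntegral MeasureTheory Function

noncomputable def envelope (α θ : ℝ) : ℝ := α ^ 2 / max |θ| α

section Envelope

variable {α : ℝ}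

lemma envelope_nonneg (α θ : ℝ) : 0 ≤ envelope α θ :=
  div_nonneg (sq_nonneg α) (le_max_of_le_left (abs_nonneg θ))

lemma envelope_neg (α θ : ℝ) : envelope α (-θ) = envelope α θ := by
  rw [envelope, envelope, abs_neg]

lemma continuous_envelope (hα : 0 < α) : Continuous (envelope α) :=
  continuous_const.div (continuous_abs.max continuous_const)
    fun _ => (hα.trans_le (le_max_right _ _)).ne'

lemma envelope_le_div {r : ℝ} (hr : 0 < r) {θ : ℝ} (h : r ≤ max |θ| α) :
    envelope α θ ≤ α ^ 2 / r :=
  div_le_div_of_nonneg_left (sq_nonneg α) hr h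

lemma envelope_le_self (hα : 0 < α) (θ : ℝ) : envelope α θ ≤ α :=
  (envelope_le_div hα (le_max_right _ _)).trans_eq (by field_simp)

lemma envelope_of_le (hα : 0 < α) {θ : ℝ} (h : α ≤ θ) : envelope α θ = α ^ 2 / θ := by
  rw [envelope, abs_of_pos (hα.trans_le h), max_eq_left h]

lemma integral_symm_eq_two_mul {f : ℝ → ℝ} (hf : Continuous f) (hf_even : ∀ x, f (-x) = f x)
    (L : ℝ) : ∫ x in -L..L, f x = 2 * ∫ x in 0..L, f x := by
  have h_left : ∫ x in -L..0, f x = ∫ x in 0..L, f x := by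
    simpa [hf_even] using (integral_comp_neg (a := 0) (b := L) f).symm
  rw [← integral_add_adjacent_intervals (hf.intervalIntegrable _ _) (hf.intervalIntegrable _ _),
    h_left, two_mul]

variable {L : ℝ}

lemma integral_envelope_sq_le (hα : 0 < α) (hαL : α ≤ L) :
    ∫ θ in 0..L, envelope α θ ^ 2 ≤ 2 * α ^ 3 := by
  have hint (a b : ℝ) : IntervalIntegrable (fun θ => envelope α θ ^ 2) volume a b :=
    ((continuous_envelope hα).pow 2).intervalIntegrable a b
  have h_core : ∫ θ in 0..α, envelope α θ ^ 2 ≤ α ^ 3 :=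
    calc ∫ θ in 0..α, envelope α θ ^ 2 ≤ ∫ _ in 0..α, α ^ 2 :=
          integral_mono_on hα.le (hint _ _) intervalIntegrable_const fun θ _ =>
            pow_le_pow_left₀ (envelope_nonneg _ _) (envelope_le_self hα θ) 2
      _ = α ^ 3 := by rw [intervalIntegral.integral_const, smul_eq_mul]; ring
  have h_tail : ∫ θ in α..L, envelope α θ ^ 2 ≤ α ^ 3 := by
    have h0 : (0 : ℝ) ∉ Set.uIcc α L := by
      rw [Set.uIcc_of_le hαL]; exact fun h => h.1.not_gt hα
    have h_eq : ∫ θ in α..L, envelope α θ ^ 2 = α ^ 4 * (α⁻¹ - L⁻¹) := by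
      rw [integral_congr (g := fun θ => α ^ 4 * θ ^ (-2 : ℤ)), intervalIntegral.integral_const_mul,
        integral_zpow (Or.inr ⟨by norm_num, h0⟩)]
      · rw [show (-2 : ℤ) + 1 = -1 by norm_num, zpow_neg_one, zpow_neg_one]
        push_cast
        ring
      · intro θ hθ
        rw [Set.uIcc_of_le hαL] at hθ
        simp only [envelope_of_le hα hθ.1, div_pow, zpow_neg, zpow_two]
        ring
    rw [h_eq]
    have : 0 ≤ L⁻¹ := inv_nonneg.2 (hα.le.trans hαL)
    calc α ^ 4 * (α⁻¹ - L⁻¹) ≤ α ^ 4 * α⁻¹ := by gcongr; linarith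
      _ = α ^ 3 := by field_simp
  rw [← integral_add_adjacent_intervals (hint 0 α) (hint α L)]
  linarith

lemma integral_envelope_le (hα : 0 < α) (hαL : α ≤ L) :
    ∫ θ in 0..L, envelope α θ ≤ α ^ 2 * (1 + log (L / α)) := by
  have hint (a b : ℝ) : IntervalIntegrable (envelope α) volume a b :=
    (continuous_envelope hα).intervalIntegrable a b
  have h_core : ∫ θ in 0..α, envelope α θ ≤ α ^ 2 :=
    calc ∫ θ in 0..α, envelope α θ ≤ ∫ _ in 0..α, α :=
          integral_mono_on hα.le (hint _ _) intervalIntegrable_const fun θ _ =>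
            envelope_le_self hα θ
      _ = α ^ 2 := by rw [intervalIntegral.integral_const, smul_eq_mul]; ring
  have h_tail : ∫ θ in α..L, envelope α θ = α ^ 2 * log (L / α) := by
    rw [integral_congr (g := fun θ => α ^ 2 * θ⁻¹), intervalIntegral.integral_const_mul,
      integral_inv_of_pos hα (hα.trans_le hαL)]
    intro θ hθ
    rw [Set.uIcc_of_le hαL] at hθ
    simp only [envelope_of_le hα hθ.1, div_eq_mul_inv]
  rw [← integral_add_adjacent_intervals (hint 0 α) (hint α L), h_tail]
  linarith

end Envelope

lemma abs_sub_round_div_mul_le {L : ℝ} (hL : 0 < L) (x : ℝ) :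
    |x - round (x / (2 * L)) * (2 * L)| ≤ L := by
  set y := x / (2 * L)
  have hx : x = y * (2 * L) := (div_mul_cancel₀ x (by positivity)).symm
  rw [hx, ← sub_mul, abs_mul, abs_of_pos (by positivity : (0 : ℝ) < 2 * L)]
  nlinarith [abs_sub_round y]

lemma le_abs_sub_int_mul {a T : ℝ} (ha : 0 ≤ a) (haT : 2 * a ≤ T) (k : ℤ) :
    a ≤ |a - k * T| := by
  rcases le_or_gt k 0 with hk | hk
  · have : (k : ℝ) * T ≤ 0 := mul_nonpos_of_nonpos_of_nonneg (by exact_mod_cast hk) (by linarith)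
    exact le_abs.2 (Or.inl (by linarith))
  · have : T ≤ (k : ℝ) * T := le_mul_of_one_le_left (by linarith) (by exact_mod_cast hk)
    exact le_abs.2 (Or.inr (by linarith))

lemma intervalIntegrable_of_abs_le {f : ℝ → ℝ} {M : ℝ} (hf : Measurable f)
    (hM : ∀ x, |f x| ≤ M) (a b : ℝ) : IntervalIntegrable f volume a b :=
  (intervalIntegrable_const (c := M)).mono_fun hf.aestronglyMeasurable
    (ae_of_all _ fun x => (hM x).trans (le_abs_self M))

namespace Function.Periodic

variable {g : ℝ → ℝ} {L α : ℝ}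

lemma abs_le_envelope_round (hg : Periodic g (2 * L)) (hL : 0 < L)
    (hbound : ∀ θ, |θ| ≤ L → |g θ| ≤ envelope α θ) (x : ℝ) :
    |g x| ≤ envelope α (x - round (x / (2 * L)) * (2 * L)) := by
  rw [← hg.sub_int_mul_eq (round (x / (2 * L)))]
  exact hbound _ (abs_sub_round_div_mul_le hL x)

lemma abs_le_of_envelope (hg : Periodic g (2 * L)) (hL : 0 < L) (hα : 0 < α)
    (hbound : ∀ θ, |θ| ≤ L → |g θ| ≤ envelope α θ) (x : ℝ) : |g x| ≤ α :=
  (hg.abs_le_envelope_round hL hbound x).trans (envelope_le_self hα _)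

/- Points at distance `a ≤ L` cannot both lie within `a / 2` of `2Lℤ`. -/
lemma abs_mul_shift_le (hg : Periodic g (2 * L)) (hα : 0 < α)
    (hbound : ∀ θ, |θ| ≤ L → |g θ| ≤ envelope α θ) {a : ℝ} (ha : 0 < a) (haL : a ≤ L)
    (θ : ℝ) : |g θ * g (θ + a)| ≤ 2 * α ^ 2 / a * (|g θ| + |g (θ + a)|) := by
  have hL : 0 < L := ha.trans_le haL
  set r : ℝ → ℝ := fun x => x - round (x / (2 * L)) * (2 * L)
  have h_far : ∀ x, a / 2 ≤ |r x| → |g x| ≤ 2 * α ^ 2 / a := fun x hx =>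
    calc |g x| ≤ envelope α (r x) := hg.abs_le_envelope_round hL hbound x
      _ ≤ α ^ 2 / (a / 2) := envelope_le_div (by positivity) (le_max_of_le_left hx)
      _ = 2 * α ^ 2 / a := by field_simp
  have h_sep : a ≤ |r θ| + |r (θ + a)| :=
    calc a ≤ |a - (round ((θ + a) / (2 * L)) - round (θ / (2 * L)) : ℤ) * (2 * L)| :=
          le_abs_sub_int_mul ha.le (by linarith) _
      _ = |r (θ + a) - r θ| := by simp only [r]; push_cast; ring_nf
      _ ≤ |r θ| + |r (θ + a)| := (abs_sub _ _).trans_eq (add_comm _ _)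
  have := abs_nonneg (g θ); have := abs_nonneg (g (θ + a))
  have hK : 0 ≤ 2 * α ^ 2 / a := by positivity
  rw [abs_mul]
  rcases le_total (a / 2) |r θ| with h | h
  · nlinarith [h_far θ h]
  · nlinarith [h_far (θ + a) (by linarith)]

lemma integral_eq_integral_symm {f : ℝ → ℝ} (hf : Periodic f (2 * L)) :
    ∫ θ in 0..2 * L, f θ = ∫ θ in -L..L, f θ := by
  simpa [show -L + 2 * L = L by ring] using hf.intervalIntegral_add_eq 0 (-L)

lemma integral_sq_le (hg : Periodic g (2 * L)) (hgm : Measurable g) (hα : 0 < α) (hαL : α ≤ L)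
    (hbound : ∀ θ, |θ| ≤ L → |g θ| ≤ envelope α θ) :
    ∫ θ in 0..2 * L, g θ ^ 2 ≤ 4 * α ^ 3 := by
  have hL : 0 < L := hα.trans_le hαL
  have hint : IntervalIntegrable (fun θ => g θ ^ 2) volume (-L) L :=
    intervalIntegrable_of_abs_le (hgm.pow_const 2) (M := α ^ 2) (fun x => by
      rw [abs_pow]
      exact pow_le_pow_left₀ (abs_nonneg _) (hg.abs_le_of_envelope hL hα hbound x) 2) _ _
  calc ∫ θ in 0..2 * L, g θ ^ 2 = ∫ θ in -L..L, g θ ^ 2 :=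
        integral_eq_integral_symm (f := fun θ => g θ ^ 2) fun x => by simp only [hg x]
    _ ≤ ∫ θ in -L..L, envelope α θ ^ 2 :=
        integral_mono_on (by linarith) hint
          (((continuous_envelope hα).pow 2).intervalIntegrable _ _) fun θ hθ => by
            rw [← sq_abs (g θ)]
            exact pow_le_pow_left₀ (abs_nonneg _) (hbound θ (abs_le.2 hθ)) 2
    _ = 2 * ∫ θ in 0..L, envelope α θ ^ 2 :=
        integral_symm_eq_two_mul ((continuous_envelope hα).pow 2)
          (fun x => congrArg (· ^ 2) (envelope_neg α x)) L
    _ ≤ 4 * α ^ 3 := by linarith [integral_envelope_sq_le hα hαL]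

lemma integral_abs_le (hg : Periodic g (2 * L)) (hgm : Measurable g) (hα : 0 < α) (hαL : α ≤ L)
    (hbound : ∀ θ, |θ| ≤ L → |g θ| ≤ envelope α θ) :
    ∫ θ in 0..2 * L, |g θ| ≤ 2 * α ^ 2 * (1 + log (L / α)) := by
  have hL : 0 < L := hα.trans_le hαL
  have hint : IntervalIntegrable (fun θ => |g θ|) volume (-L) L :=
    intervalIntegrable_of_abs_le hgm.abs (fun x => by
      rw [abs_abs]; exact hg.abs_le_of_envelope hL hα hbound x) _ _
  calc ∫ θ in 0..2 * L, |g θ| = ∫ θ in -L..L, |g θ| :=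
        integral_eq_integral_symm (f := fun θ => |g θ|) fun x => by simp only [hg x]
    _ ≤ ∫ θ in -L..L, envelope α θ :=
        integral_mono_on (by linarith) hint
          ((continuous_envelope hα).intervalIntegrable _ _) fun θ hθ => hbound θ (abs_le.2 hθ)
    _ = 2 * ∫ θ in 0..L, envelope α θ :=
        integral_symm_eq_two_mul (continuous_envelope hα) (envelope_neg α) L
    _ ≤ 2 * α ^ 2 * (1 + log (L / α)) := by linarith [integral_envelope_le hα hαL]

lemma integral_abs_mul_shift_le (hg : Periodic g (2 * L)) (hgm : Measurable g) (hα : 0 < α)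
    (hαL : α ≤ L) (hbound : ∀ θ, |θ| ≤ L → |g θ| ≤ envelope α θ) {a : ℝ} (ha : 0 < a)
    (haL : a ≤ L) :
    ∫ θ in 0..2 * L, |g θ * g (θ + a)| ≤ 8 * α ^ 4 / a * (1 + log (L / α)) := by
  have hL : 0 < L := hα.trans_le hαL
  have hbd := hg.abs_le_of_envelope hL hα hbound
  have hgm_shift : Measurable fun θ => g (θ + a) := hgm.comp (measurable_add_const a)
  have hint_abs : IntervalIntegrable (fun θ => |g θ|) volume 0 (2 * L) :=
    intervalIntegrable_of_abs_le hgm.abs (fun x => by rw [abs_abs]; exact hbd x) _ _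
  have hint_shift : IntervalIntegrable (fun θ => |g (θ + a)|) volume 0 (2 * L) :=
    intervalIntegrable_of_abs_le hgm_shift.abs (fun x => by rw [abs_abs]; exact hbd _) _ _
  have hint_mul : IntervalIntegrable (fun θ => |g θ * g (θ + a)|) volume 0 (2 * L) :=
    intervalIntegrable_of_abs_le (hgm.mul hgm_shift).abs (M := α ^ 2) (fun x => by
      rw [Pi.mul_apply, abs_abs, abs_mul, sq]
      exact mul_le_mul (hbd x) (hbd _) (abs_nonneg _) hα.le) _ _
  have h_shift : ∫ θ in 0..2 * L, |g (θ + a)| = ∫ θ in 0..2 * L, |g θ| := by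
    rw [intervalIntegral.integral_comp_add_right (fun θ => |g θ|), zero_add, add_comm]
    have hg_abs : Periodic (fun θ => |g θ|) (2 * L) := fun x => by simp only [hg x]
    simpa using hg_abs.intervalIntegral_add_eq a 0
  calc ∫ θ in 0..2 * L, |g θ * g (θ + a)|
      ≤ ∫ θ in 0..2 * L, 2 * α ^ 2 / a * (|g θ| + |g (θ + a)|) :=
        integral_mono_on (by linarith) hint_mul
          ((hint_abs.add hint_shift).const_mul _)
          fun θ _ => hg.abs_mul_shift_le hα hbound ha haL θ
    _ = 2 * α ^ 2 / a * (2 * ∫ θ in 0..2 * L, |g θ|) := by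
        rw [intervalIntegral.integral_const_mul, intervalIntegral.integral_add hint_abs hint_shift,
          h_shift]
        ring
    _ ≤ 2 * α ^ 2 / a * (2 * (2 * α ^ 2 * (1 + log (L / α)))) := by
        gcongr; exact hg.integral_abs_le hgm hα hαL hbound
    _ = 8 * α ^ 4 / a * (1 + log (L / α)) := by ring

end Function.Periodic

lemma one_le_log_one_div {δ : ℝ} (hδ0 : 0 < δ) (hδ : δ ≤ 1 / 3) : 1 ≤ log (1 / δ) := by
  have h3 : (3 : ℝ) ≤ 1 / δ := by rw [le_div_iff₀ hδ0]; linarith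
  calc (1 : ℝ) = log (exp 1) := (log_exp 1).symm
    _ ≤ log 3 := log_le_log (exp_pos 1) (by linarith [exp_one_lt_d9])
    _ ≤ log (1 / δ) := log_le_log (by norm_num) h3

lemma one_add_log_div_mul_le {L C δ : ℝ} (hL : 0 < L) (hC : 0 < C) (hδ0 : 0 < δ)
    (hδ : δ ≤ 1 / 3) : 1 + log (L / (C * δ)) ≤ (2 + |log (L / C)|) * log (1 / δ) := by
  have h_split : log (L / (C * δ)) = log (L / C) + log (1 / δ) := by
    rw [← log_mul (by positivity) (by positivity)]
    congr 1; field_simp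
  have h1 := one_le_log_one_div hδ0 hδ
  have h2 := le_abs_self (log (L / C))
  nlinarith [abs_nonneg (log (L / C))]

/-- If `g₀` is `2π`-periodic with `|g₀(θ)| ≤ α²/(|θ| ∨ α)` for `|θ| ≤ π`, `α = Cδ ≤ π`,
then `(1/2π)∫₀^{2π} g₀² ≤ C'δ³` and, for `a ∈ [δ,π]`,
`(1/2π)∫₀^{2π} |g₀(θ)g₀(θ+a)| dθ ≤ C'(δ⁴/a)log(1/δ)`, with `C'` depending only on `C`. -/
theorem stmt7 (C : ℝ) (hC : 0 < C) : ∃ C' : ℝ, 0 < C' ∧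
    ∀ (δ : ℝ), δ ∈ Set.Ioc (0:ℝ) (1/3) →
    ∀ (g₀ : ℝ → ℝ), Measurable g₀ →
    (∀ θ : ℝ, g₀ (θ + 2 * Real.pi) = g₀ θ) →
    C * δ ≤ Real.pi →
    (∀ θ : ℝ, |θ| ≤ Real.pi → |g₀ θ| ≤ (C * δ)^2 / (max |θ| (C * δ))) →
    (1 / (2 * Real.pi)) * (∫ θ in (0:ℝ)..(2 * Real.pi), (g₀ θ)^2) ≤ C' * δ^3 ∧
    ∀ a ∈ Set.Icc δ Real.pi,
      (1 / (2 * Real.pi)) * (∫ θ in (0:ℝ)..(2 * Real.pi), |g₀ θ * g₀ (θ + a)|) ≤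
        C' * (δ^4 / a) * Real.log (1 / δ) := by
  set M := 2 + |log (π / C)|
  have hM : 0 < M := by positivity
  refine ⟨2 / π * C ^ 3 + 4 / π * C ^ 4 * M, by positivity, ?_⟩
  rintro δ ⟨hδ0, hδ⟩ g₀ hmeas hper hαπ hbound
  have hα : 0 < C * δ := by positivity
  have hg : Periodic g₀ (2 * π) := hper
  constructor
  · calc 1 / (2 * π) * ∫ θ in 0..2 * π, g₀ θ ^ 2 ≤ 1 / (2 * π) * (4 * (C * δ) ^ 3) := by
          gcongr; exact hg.integral_sq_le hmeas hα hαπ hbound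
      _ = 2 / π * C ^ 3 * δ ^ 3 := by field_simp; ring
      _ ≤ _ := by gcongr; exact le_add_of_nonneg_right (by positivity)
  · rintro a ⟨haδ, haπ⟩
    have ha : 0 < a := hδ0.trans_le haδ
    have hlog := one_add_log_div_mul_le pi_pos hC hδ0 hδ
    have hlog_nonneg : 0 ≤ log (1 / δ) := by linarith [one_le_log_one_div hδ0 hδ]
    calc 1 / (2 * π) * ∫ θ in 0..2 * π, |g₀ θ * g₀ (θ + a)|
        ≤ 1 / (2 * π) * (8 * (C * δ) ^ 4 / a * (1 + log (π / (C * δ)))) := by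
          gcongr; exact hg.integral_abs_mul_shift_le hmeas hα hαπ hbound ha haπ
      _ = 4 / π * C ^ 4 * (δ ^ 4 / a) * (1 + log (π / (C * δ))) := by field_simp; ring
      _ ≤ 4 / π * C ^ 4 * (δ ^ 4 / a) * (M * log (1 / δ)) := by gcongr
      _ ≤ _ := by
          rw [← mul_assoc, mul_right_comm _ _ M]
          gcongr
          exact le_add_of_nonneg_left (by positivity)
end

section
/- Let Y be a nonnegative random variable of the form Y = g₀*(U) where U is uniform on (-π,π] and g₀*(θ) = α²/(|θ| ∨ α) for an α ∈ (0,π]. Then E(e^{Y/α}) ≤ exp{(αe/π)(1 + log(π/α))}. -/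
/-!
On `[-α, α]` the integrand is `e`, and elsewhere `e^{α/|θ|}` with `α/|θ| ≤ 1`; in both cases
`e^{α/max(|θ|,α)} ≤ 1 + e·α/max(|θ|,α)` by convexity of `exp` on `[0, 1]`. The function
`1/max(|θ|,α)` integrates to `2(1 + log(π/α))` over `[-π, π]`, so the average is at most
`1 + (αe/π)(1 + log(π/α))`, and `1 + x ≤ eˣ` finishes.
-/

open Real intervalIntegral

lemma Real.exp_le_one_add_exp_one_mul {x : ℝ} (hx0 : 0 ≤ x) (hx1 : x ≤ 1) :
    exp x ≤ 1 + exp 1 * x := by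
  have chord := convexOn_exp.2 (Set.mem_univ 0) (Set.mem_univ 1) (sub_nonneg.2 hx1) hx0
    (sub_add_cancel 1 x)
  simp only [smul_eq_mul, mul_zero, mul_one, exp_zero, zero_add] at chord
  linarith

section InvMaxAbs

variable {a b : ℝ}

lemma continuous_inv_max_abs (ha : 0 < a) : Continuous fun θ : ℝ => (max |θ| a)⁻¹ :=
  (continuous_abs.max continuous_const).inv₀ fun _ => (ha.trans_le (le_max_right _ _)).ne'

lemma integral_zero_inv_max_abs (ha : 0 < a) (hab : a ≤ b) :
    ∫ θ in 0..b, (max |θ| a)⁻¹ = 1 + log (b / a) := by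
  have hint := (continuous_inv_max_abs ha).intervalIntegrable (μ := MeasureTheory.volume)
  have h_inner : ∫ θ in 0..a, (max |θ| a)⁻¹ = ∫ _ in 0..a, a⁻¹ := by
    refine integral_congr fun θ hθ => ?_
    rw [Set.uIcc_of_le ha.le] at hθ
    rw [max_eq_right (abs_le.2 ⟨by linarith [hθ.1], hθ.2⟩)]
  have h_outer : ∫ θ in a..b, (max |θ| a)⁻¹ = ∫ θ in a..b, θ⁻¹ := by
    refine integral_congr fun θ hθ => ?_
    rw [Set.uIcc_of_le hab] at hθ
    rw [abs_of_pos (ha.trans_le hθ.1), max_eq_left hθ.1]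
  rw [← integral_add_adjacent_intervals (hint 0 a) (hint a b), h_inner, h_outer,
    integral_const, integral_inv_of_pos ha (ha.trans_le hab), smul_eq_mul, sub_zero,
    mul_inv_cancel₀ ha.ne']

lemma integral_symm_inv_max_abs (ha : 0 < a) (hab : a ≤ b) :
    ∫ θ in -b..b, (max |θ| a)⁻¹ = 2 * (1 + log (b / a)) := by
  have hint := (continuous_inv_max_abs ha).intervalIntegrable (μ := MeasureTheory.volume)
  have h_left : ∫ θ in -b..0, (max |θ| a)⁻¹ = ∫ θ in 0..b, (max |θ| a)⁻¹ := by
    simpa only [abs_neg, neg_zero] using (integral_comp_neg (a := 0) (b := b)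
      fun θ => (max |θ| a)⁻¹).symm
  rw [← integral_add_adjacent_intervals (hint (-b) 0) (hint 0 b), h_left,
    integral_zero_inv_max_abs ha hab]
  ring

end InvMaxAbs

lemma exp_sq_div_max_abs_div_le {a : ℝ} (ha : 0 < a) (θ : ℝ) :
    exp ((a ^ 2 / max |θ| a) / a) ≤ 1 + exp 1 * a * (max |θ| a)⁻¹ := by
  have hM : 0 < max |θ| a := ha.trans_le (le_max_right _ _)
  have h_eq : (a ^ 2 / max |θ| a) / a = a / max |θ| a := by field_simp
  rw [h_eq, mul_assoc, ← div_eq_mul_inv]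
  exact exp_le_one_add_exp_one_mul (by positivity) ((div_le_one hM).2 (le_max_right _ _))

/-- For `Y = g₀*(U)`, `U` uniform on `(-π,π]`, `g₀*(θ) = α²/(|θ| ∨ α)` with `α ∈ (0,π]`:
`E(e^{Y/α}) = (1/2π)∫_{-π}^π e^{g₀*(θ)/α} dθ ≤ exp{(αe/π)(1 + log(π/α))}`. -/
theorem stmt16 (α : ℝ) (hα : α ∈ Set.Ioc (0:ℝ) Real.pi) :
    (1 / (2 * Real.pi)) *
      (∫ θ in (-Real.pi)..Real.pi, Real.exp ((α^2 / (max |θ| α)) / α)) ≤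
    Real.exp ((α * Real.exp 1 / Real.pi) * (1 + Real.log (Real.pi / α))) := by
  obtain ⟨hα0, hαπ⟩ := hα
  have h_inv := continuous_inv_max_abs hα0
  have h_mono : ∫ θ in (-π)..π, exp ((α ^ 2 / max |θ| α) / α) ≤
      ∫ θ in (-π)..π, (1 + exp 1 * α * (max |θ| α)⁻¹) := by
    refine integral_mono_on (by linarith [pi_pos]) ?_ ?_
      fun θ _ => exp_sq_div_max_abs_div_le hα0 θ
    · exact ((continuous_const.div (continuous_abs.max continuous_const)
        fun _ => (hα0.trans_le (le_max_right _ _)).ne').div_const α).rexp.intervalIntegrable _ _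
    · exact (continuous_const.add (continuous_const.mul h_inv)).intervalIntegrable _ _
  have h_bound : ∫ θ in (-π)..π, (1 + exp 1 * α * (max |θ| α)⁻¹) =
      2 * π + exp 1 * α * (2 * (1 + log (π / α))) := by
    rw [integral_add intervalIntegrable_const
      ((h_inv.intervalIntegrable _ _).const_mul _),
      integral_const_mul, integral_symm_inv_max_abs hα0 hαπ, integral_const, smul_eq_mul]
    ring
  calc 1 / (2 * π) * ∫ θ in (-π)..π, exp ((α ^ 2 / max |θ| α) / α)
      ≤ 1 / (2 * π) * (2 * π + exp 1 * α * (2 * (1 + log (π / α)))) := by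
        rw [← h_bound]; gcongr
    _ = (α * exp 1 / π) * (1 + log (π / α)) + 1 := by field_simp; ring
    _ ≤ exp ((α * exp 1 / π) * (1 + log (π / α))) := add_one_le_exp _
end

section
/- The space (𝒟, d_𝒟) is a complete metric space, where 𝒟 is the set of pairs f = {f⁻, f⁺} with f⁺ right-continuous nondecreasing on ℝ, f⁺ - id 2π-periodic, f⁻ the left-continuous modification of f⁺, and d_𝒟(f,g) = inf{ε ≥ 0 : f⁺(x) ≤ g⁺(x+ε)+ε and g⁺(x) ≤ f⁺(x+ε)+ε for all x ∈ ℝ}. -/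
open Filter

/-- An element of the space `𝒟`: a right-continuous nondecreasing function `f⁺` on `ℝ`
with `f⁺ - id` periodic of period `2π`.  (The left-continuous modification `f⁻` is
determined by `f⁺` and is omitted.) -/
structure CircD where
  toFun : ℝ → ℝ
  mono : Monotone toFun
  right_cont : ∀ x : ℝ, ContinuousWithinAt toFun (Set.Ici x) x
  periodic : ∀ x : ℝ, toFun (x + 2 * Real.pi) = toFun x + 2 * Real.pi

/-- The metric `d_𝒟` on `𝒟`. -/
noncomputable def dD (f g : CircD) : ℝ :=
  sInf {ε : ℝ | 0 ≤ ε ∧ ∀ x : ℝ,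
    f.toFun x ≤ g.toFun (x + ε) + ε ∧ g.toFun x ≤ f.toFun (x + ε) + ε}

/-!
The admissible shifts `ε` form an up-closed subset of `[0, ∞)` (by monotonicity), nonempty because
`f⁺ - id` is periodic and hence bounded; shifts add along `f, g, h`, which gives the triangle
inequality, and right-continuity lets `ε → 0⁺` when `d_𝒟(f, g) = 0`.

For completeness, take a Cauchy sequence `uₙ` and the pointwise `L x = limsup uₙ(x)`. It is
monotone and `L - id` is `2π`-periodic, but it need not be right-continuous; its right limit
`l = L(·⁺)` is, and `L(x) ≤ l(x) ≤ L(x + ε)` costs only one more `ε` in the estimate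
`d_𝒟(uₙ, l) ≤ 2ε` once `d_𝒟(uₘ, uₙ) < ε` for all `m, n ≥ N`.
-/

open Topology Function Real

theorem abs_sub_sub_le_of_monotone_of_periodic {F : ℝ → ℝ} {c : ℝ} (hF : Monotone F)
    (hc : 0 < c) (hp : Periodic (fun x => F x - x) c) (x : ℝ) : |F x - x - F 0| ≤ c := by
  obtain ⟨y, ⟨hy0, hyc⟩, hxy⟩ := hp.exists_mem_Ico₀ hc x
  have hFc : F c - c = F 0 := by simpa using hp 0
  have h0y := hF hy0
  have hyc' := hF hyc.le
  rw [hxy, abs_le]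
  constructor <;> linarith

theorem Monotone.rightLim_add_of_map_add {f : ℝ → ℝ} (hf : Monotone f) {c : ℝ}
    (h : ∀ x, f (x + c) = f x + c) (x : ℝ) : rightLim f (x + c) = rightLim f x + c := by
  have hshift : Tendsto (· + c) (𝓝[>] x) (𝓝[>] (x + c)) :=
    (continuous_add_const c).continuousWithinAt.tendsto_nhdsWithin fun y hy =>
      add_lt_add_left hy c
  refine tendsto_nhds_unique ((hf.tendsto_rightLim _).comp hshift) ?_
  simpa only [comp_def, h] using (hf.tendsto_rightLim x).add_const c

namespace CircD

theorem ext {f g : CircD} (h : f.toFun = g.toFun) : f = g := by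
  cases f
  cases g
  congr

theorem periodic_sub_id (f : CircD) : Periodic (fun x => f.toFun x - x) (2 * π) := fun x => by
  simp only [f.periodic]
  ring

theorem abs_sub_sub_le (f : CircD) (x : ℝ) : |f.toFun x - x - f.toFun 0| ≤ 2 * π :=
  abs_sub_sub_le_of_monotone_of_periodic f.mono (by positivity) f.periodic_sub_id x

def admissible (f g : CircD) : Set ℝ :=
  {ε : ℝ | 0 ≤ ε ∧ ∀ x : ℝ, f.toFun x ≤ g.toFun (x + ε) + ε ∧ g.toFun x ≤ f.toFun (x + ε) + ε}

theorem dD_eq_sInf_admissible (f g : CircD) : dD f g = sInf (admissible f g) := rfl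

theorem admissible_comm (f g : CircD) : admissible f g = admissible g f := by
  ext ε
  exact ⟨fun ⟨h0, h⟩ => ⟨h0, fun x => (h x).symm⟩, fun ⟨h0, h⟩ => ⟨h0, fun x => (h x).symm⟩⟩

theorem abs_sub_mem_admissible (f g : CircD) :
    |f.toFun 0 - g.toFun 0| + 2 * π ∈ admissible f g := by
  refine ⟨by positivity, fun x => ?_⟩
  set ε := |f.toFun 0 - g.toFun 0| + 2 * π
  have hf := abs_le.1 (f.abs_sub_sub_le x)
  have hg := abs_le.1 (g.abs_sub_sub_le x)
  have hf' := abs_le.1 (f.abs_sub_sub_le (x + ε))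
  have hg' := abs_le.1 (g.abs_sub_sub_le (x + ε))
  have h₁ := le_abs_self (f.toFun 0 - g.toFun 0)
  have h₂ := neg_abs_le (f.toFun 0 - g.toFun 0)
  constructor <;> linarith

theorem admissible_nonempty (f g : CircD) : (admissible f g).Nonempty :=
  ⟨_, abs_sub_mem_admissible f g⟩

theorem mem_admissible_of_le {f g : CircD} {a b : ℝ} (ha : a ∈ admissible f g) (hab : a ≤ b) :
    b ∈ admissible f g := by
  refine ⟨ha.1.trans hab, fun x => ?_⟩
  have hg := g.mono (show x + a ≤ x + b by linarith)
  have hf := f.mono (show x + a ≤ x + b by linarith)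
  have := ha.2 x
  constructor <;> linarith

theorem add_mem_admissible {f g h : CircD} {a b : ℝ} (ha : a ∈ admissible f g)
    (hb : b ∈ admissible g h) : a + b ∈ admissible f h := by
  refine ⟨add_nonneg ha.1 hb.1, fun x => ⟨?_, ?_⟩⟩
  · have h₁ := (ha.2 x).1
    have h₂ := (hb.2 (x + a)).1
    rw [add_assoc] at h₂
    linarith
  · have h₁ := (hb.2 x).2
    have h₂ := (ha.2 (x + b)).2
    rw [add_assoc, add_comm b a] at h₂
    linarith

theorem bddBelow_admissible (f g : CircD) : BddBelow (admissible f g) :=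
  ⟨0, fun _ hε => hε.1⟩

theorem dD_le_of_mem {f g : CircD} {ε : ℝ} (hε : ε ∈ admissible f g) : dD f g ≤ ε :=
  csInf_le (bddBelow_admissible f g) hε

theorem dD_nonneg (f g : CircD) : 0 ≤ dD f g :=
  le_csInf (admissible_nonempty f g) fun _ hε => hε.1

theorem mem_admissible_of_dD_lt {f g : CircD} {ε : ℝ} (h : dD f g < ε) : ε ∈ admissible f g := by
  obtain ⟨a, ha, haε⟩ := exists_lt_of_csInf_lt (admissible_nonempty f g) h
  exact mem_admissible_of_le ha haε.le

theorem dD_comm (f g : CircD) : dD f g = dD g f := by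
  rw [dD_eq_sInf_admissible, dD_eq_sInf_admissible, admissible_comm]

theorem dD_triangle (f g h : CircD) : dD f h ≤ dD f g + dD g h := by
  refine le_of_forall_pos_le_add fun δ hδ => dD_le_of_mem ?_
  have hfg := mem_admissible_of_dD_lt (show dD f g < dD f g + δ / 2 by linarith)
  have hgh := mem_admissible_of_dD_lt (show dD g h < dD g h + δ / 2 by linarith)
  convert add_mem_admissible hfg hgh using 1
  ring

theorem dD_self (f : CircD) : dD f f = 0 :=
  le_antisymm (dD_le_of_mem ⟨le_rfl, fun x => by simp⟩) (dD_nonneg f f)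

theorem le_of_dD_eq_zero {f g : CircD} (h : dD f g = 0) (x : ℝ) : f.toFun x ≤ g.toFun x := by
  have hlim : Tendsto (fun y => g.toFun y + (y - x)) (𝓝[>] x) (𝓝 (g.toFun x + (x - x))) :=
    (((g.right_cont x).add (continuous_sub_right x).continuousWithinAt).mono
      Set.Ioi_subset_Ici_self).tendsto
  rw [sub_self, add_zero] at hlim
  refine ge_of_tendsto hlim ?_
  filter_upwards [self_mem_nhdsWithin] with y (hy : x < y)
  have hε := mem_admissible_of_dD_lt (show dD f g < y - x by linarith)
  simpa using (hε.2 x).1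

theorem dD_eq_zero_iff (f g : CircD) : dD f g = 0 ↔ f = g := by
  refine ⟨fun h => ext (funext fun x => le_antisymm (le_of_dD_eq_zero h x) ?_), ?_⟩
  · exact le_of_dD_eq_zero (by rwa [dD_comm]) x
  · rintro rfl
    exact dD_self f

def IsCauchyDD (u : ℕ → CircD) : Prop :=
  ∀ ε : ℝ, 0 < ε → ∃ N : ℕ, ∀ m ≥ N, ∀ n ≥ N, dD (u m) (u n) < ε

section Completeness

variable {u : ℕ → CircD}

theorem IsCauchyDD.exists_forall_le {ε : ℝ} (hu : IsCauchyDD u) (hε : 0 < ε) :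
    ∃ N, ∀ m ≥ N, ∀ n ≥ N, ∀ x, (u m).toFun x ≤ (u n).toFun (x + ε) + ε := by
  obtain ⟨N, hN⟩ := hu ε hε
  exact ⟨N, fun m hm n hn x => ((mem_admissible_of_dD_lt (hN m hm n hn)).2 x).1⟩

theorem IsCauchyDD.isBoundedUnder_le (hu : IsCauchyDD u) (x : ℝ) :
    IsBoundedUnder (· ≤ ·) atTop fun n => (u n).toFun x := by
  obtain ⟨N, hN⟩ := hu.exists_forall_le one_pos
  exact isBoundedUnder_of_eventually_le (eventually_atTop.2 ⟨N, fun n hn => hN n hn N le_rfl x⟩)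

theorem IsCauchyDD.isBoundedUnder_ge (hu : IsCauchyDD u) (x : ℝ) :
    IsBoundedUnder (· ≥ ·) atTop fun n => (u n).toFun x := by
  obtain ⟨N, hN⟩ := hu.exists_forall_le one_pos
  refine isBoundedUnder_of_eventually_ge (a := (u N).toFun (x - 1) - 1)
    (eventually_atTop.2 ⟨N, fun n hn => ?_⟩)
  have := hN N le_rfl n hn (x - 1)
  rw [sub_add_cancel] at this
  linarith

noncomputable def limsupFun (u : ℕ → CircD) (x : ℝ) : ℝ :=
  limsup (fun n => (u n).toFun x) atTop

theorem IsCauchyDD.limsupFun_le {x c : ℝ} (hu : IsCauchyDD u)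
    (h : ∀ᶠ n in atTop, (u n).toFun x ≤ c) : limsupFun u x ≤ c :=
  limsup_le_of_le (hu.isBoundedUnder_ge x).isCoboundedUnder_le h

theorem IsCauchyDD.le_limsupFun {x c : ℝ} (hu : IsCauchyDD u)
    (h : ∀ᶠ n in atTop, c ≤ (u n).toFun x) : c ≤ limsupFun u x :=
  le_limsup_of_frequently_le h.frequently (hu.isBoundedUnder_le x)

theorem IsCauchyDD.monotone_limsupFun (hu : IsCauchyDD u) : Monotone (limsupFun u) :=
  fun x y hxy => limsup_le_limsup (Eventually.of_forall fun n => (u n).mono hxy)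
    (hu.isBoundedUnder_ge x).isCoboundedUnder_le (hu.isBoundedUnder_le y)

theorem IsCauchyDD.limsupFun_add_two_pi (hu : IsCauchyDD u) (x : ℝ) :
    limsupFun u (x + 2 * π) = limsupFun u x + 2 * π := by
  simp only [limsupFun, CircD.periodic]
  exact limsup_add_const _ _ _ (hu.isBoundedUnder_le x)
    (hu.isBoundedUnder_ge x).isCoboundedUnder_le

noncomputable def IsCauchyDD.limit (hu : IsCauchyDD u) : CircD where
  toFun := rightLim (limsupFun u)
  mono := hu.monotone_limsupFun.rightLim
  right_cont := hu.monotone_limsupFun.stieltjesFunction.right_continuous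
  periodic := hu.monotone_limsupFun.rightLim_add_of_map_add hu.limsupFun_add_two_pi

theorem IsCauchyDD.two_mul_mem_admissible_limit (hu : IsCauchyDD u) {ε : ℝ} (hε : 0 < ε)
    {N n : ℕ} (hN : ∀ m ≥ N, ∀ k ≥ N, ∀ x, (u m).toFun x ≤ (u k).toFun (x + ε) + ε)
    (hn : N ≤ n) :
    2 * ε ∈ admissible (u n) hu.limit := by
  have hL := hu.monotone_limsupFun
  refine ⟨by positivity, fun x => ⟨?_, ?_⟩⟩
  · have h₁ : (u n).toFun x - ε ≤ limsupFun u (x + ε) :=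
      hu.le_limsupFun (eventually_atTop.2 ⟨N, fun m hm => by linarith [hN n hn m hm x]⟩)
    have h₂ : limsupFun u (x + ε) ≤ rightLim (limsupFun u) (x + 2 * ε) :=
      hL.le_rightLim (by linarith)
    change (u n).toFun x ≤ rightLim (limsupFun u) (x + 2 * ε) + 2 * ε
    linarith
  · have h₁ : rightLim (limsupFun u) x ≤ limsupFun u (x + ε) := hL.rightLim_le (by linarith)
    have h₂ : limsupFun u (x + ε) ≤ (u n).toFun (x + ε + ε) + ε :=
      hu.limsupFun_le (eventually_atTop.2 ⟨N, fun m hm => hN m hm n hn (x + ε)⟩)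
    rw [add_assoc, ← two_mul] at h₂
    change rightLim (limsupFun u) x ≤ (u n).toFun (x + 2 * ε) + 2 * ε
    linarith

theorem IsCauchyDD.tendsto_dD_limit (hu : IsCauchyDD u) :
    Tendsto (fun n => dD (u n) hu.limit) atTop (𝓝 0) := by
  refine tendsto_order.2 ⟨fun a ha => Eventually.of_forall fun n => ha.trans_le (dD_nonneg _ _),
    fun ε hε => ?_⟩
  obtain ⟨N, hN⟩ := hu.exists_forall_le (show 0 < ε / 3 by positivity)
  filter_upwards [eventually_ge_atTop N] with n hn
  have := dD_le_of_mem (hu.two_mul_mem_admissible_limit (by positivity) hN hn)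
  linarith

end Completeness

end CircD

/-- `(𝒟, d_𝒟)` is a complete metric space. -/
theorem stmt19 :
    (∀ f g : CircD, 0 ≤ dD f g) ∧
    (∀ f g : CircD, dD f g = 0 ↔ f = g) ∧
    (∀ f g : CircD, dD f g = dD g f) ∧
    (∀ f g h : CircD, dD f h ≤ dD f g + dD g h) ∧
    (∀ u : ℕ → CircD,
      (∀ ε : ℝ, 0 < ε → ∃ N : ℕ, ∀ m ≥ N, ∀ n ≥ N, dD (u m) (u n) < ε) →
      ∃ l : CircD, Tendsto (fun n => dD (u n) l) atTop (nhds 0)) :=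
  ⟨CircD.dD_nonneg, CircD.dD_eq_zero_iff, CircD.dD_comm, CircD.dD_triangle,
    fun _ hu => ⟨CircD.IsCauchyDD.limit hu, CircD.IsCauchyDD.tendsto_dD_limit hu⟩⟩
end
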